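/- arXiv:1208.2105 — 5 statements merged into one kernel-verified Lean document; each statement's English description precedes it below -/
import Mathlib

section
/- Let m ≥ 1 be an integer and let a, b ∈ ℝ satisfy a² + b² = 1. Then ∫₀^{π/2} (a·cos(mθ) + b·sin(mθ))² dθ ≥ (m·π − 2)/(4m), moreover (m·π − 2)/(4m) > π/12, and ∫₀^{2π} (a·cos(mθ) + b·sin(mθ))² dθ = π; consequently ∫₀^{π/2} (a·cos(mθ) + b·sin(mθ))² dθ > (1/12) ∫₀^{2π} (a·cos(mθ) + b·sin(mθ))² dθ. -/
/-!
Expanding the square with the double-angle formulas gives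
`(a cos x + b sin x)² = (a² + b²)/2 + (a² - b²)/2 · cos 2x + ab · sin 2x`, which integrates in
closed form. Over `[0, 2π]` the oscillating terms vanish and leave `π`; over `[0, π/2]` the only
surviving oscillating term is `ab (1 - cos mπ) / (2m)`, which is at least `-1/(2m)` because
`ab ≥ -(a² + b²)/2 = -1/2` and `0 ≤ 1 - cos mπ ≤ 2`.
-/

open Real

theorem sq_mul_cos_add_mul_sin (a b x : ℝ) :
    (a * cos x + b * sin x) ^ 2 =
      (a ^ 2 + b ^ 2) / 2 + (a ^ 2 - b ^ 2) / 2 * cos (2 * x) + a * b * sin (2 * x) := by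
  rw [cos_two_mul, sin_two_mul]
  linear_combination b ^ 2 * sin_sq_add_cos_sq x

theorem integral_sq_mul_cos_add_mul_sin {m : ℝ} (hm : m ≠ 0) (a b T : ℝ) :
    ∫ θ in (0 : ℝ)..T, (a * cos (m * θ) + b * sin (m * θ)) ^ 2 =
      (a ^ 2 + b ^ 2) / 2 * T + (a ^ 2 - b ^ 2) / (4 * m) * sin (2 * m * T)
        + a * b / (2 * m) * (1 - cos (2 * m * T)) := by
  simp_rw [sq_mul_cos_add_mul_sin, ← mul_assoc]
  rw [intervalIntegral.integral_add (by apply Continuous.intervalIntegrable; fun_prop)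
      (by apply Continuous.intervalIntegrable; fun_prop),
    intervalIntegral.integral_add (by apply Continuous.intervalIntegrable; fun_prop)
      (by apply Continuous.intervalIntegrable; fun_prop),
    intervalIntegral.integral_const_mul, intervalIntegral.integral_const_mul,
    intervalIntegral.integral_comp_mul_left (fun x => cos x) (by positivity),
    intervalIntegral.integral_comp_mul_left (fun x => sin x) (by positivity),
    integral_cos, integral_sin]
  simp only [intervalIntegral.integral_const, mul_zero, sin_zero, cos_zero, sub_zero, smul_eq_mul]
  field_simp
  ring

theorem integral_zero_two_pi_sq_mul_cos_add_mul_sin {n : ℕ} (hn : n ≠ 0) (a b : ℝ) :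
    ∫ θ in (0 : ℝ)..(2 * π), (a * cos (n * θ) + b * sin (n * θ)) ^ 2 = (a ^ 2 + b ^ 2) * π := by
  have hsin : sin (2 * n * (2 * π)) = 0 := by
    rw [show 2 * (n : ℝ) * (2 * π) = (4 * n : ℕ) * π by push_cast; ring, sin_nat_mul_pi]
  have hcos : cos (2 * n * (2 * π)) = 1 := by
    rw [show 2 * (n : ℝ) * (2 * π) = (2 * n : ℕ) * (2 * π) by push_cast; ring,
      cos_nat_mul_two_pi]
  rw [integral_sq_mul_cos_add_mul_sin (Nat.cast_ne_zero.mpr hn), hsin, hcos]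
  ring

theorem integral_zero_pi_div_two_sq_mul_cos_add_mul_sin {n : ℕ} (hn : n ≠ 0) (a b : ℝ) :
    ∫ θ in (0 : ℝ)..(π / 2), (a * cos (n * θ) + b * sin (n * θ)) ^ 2 =
      (a ^ 2 + b ^ 2) * π / 4 + a * b / (2 * n) * (1 - cos (n * π)) := by
  rw [integral_sq_mul_cos_add_mul_sin (Nat.cast_ne_zero.mpr hn),
    show 2 * (n : ℝ) * (π / 2) = n * π by ring, sin_nat_mul_pi]
  ring

theorem sub_two_div_le_integral_zero_pi_div_two {n : ℕ} (hn : n ≠ 0) {a b : ℝ}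
    (hab : a ^ 2 + b ^ 2 = 1) :
    (n * π - 2) / (4 * n) ≤
      ∫ θ in (0 : ℝ)..(π / 2), (a * cos (n * θ) + b * sin (n * θ)) ^ 2 := by
  have hab_ge : -(1 / 2 : ℝ) ≤ a * b := by nlinarith [sq_nonneg (a + b)]
  have hcos_le := cos_le_one (n * π)
  have hcos_ge := neg_one_le_cos (n * π)
  have hosc : -1 ≤ a * b * (1 - cos (n * π)) := by
    nlinarith [mul_nonneg (by linarith : (0 : ℝ) ≤ a * b + 1 / 2)
      (by linarith : (0 : ℝ) ≤ 1 - cos (n * π))]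
  rw [integral_zero_pi_div_two_sq_mul_cos_add_mul_sin hn, hab,
    div_le_iff₀ (by positivity)]
  have hexpand : (1 * π / 4 + a * b / (2 * n) * (1 - cos (n * π))) * (4 * n) =
      n * π + 2 * (a * b * (1 - cos (n * π))) := by
    field_simp
    ring
  linarith

theorem pi_div_twelve_lt_sub_two_div {m : ℝ} (hm : 1 ≤ m) : π / 12 < (m * π - 2) / (4 * m) := by
  rw [div_lt_div_iff₀ (by norm_num) (by positivity)]
  nlinarith [pi_gt_three]

/-- The inequality chain from the disc example: the quarter-arc angular integral is
bounded below by `(mπ - 2)/(4m) > π/12`, the full-circle integral equals `π`, and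
consequently the quarter-arc integral exceeds one twelfth of the full one. -/
theorem stmt_2 (m : ℕ) (hm : 1 ≤ m) (a b : ℝ) (hab : a ^ 2 + b ^ 2 = 1) :
    ((m * π - 2) / (4 * m) ≤
        ∫ θ in (0 : ℝ)..(π / 2), (a * Real.cos (m * θ) + b * Real.sin (m * θ)) ^ 2) ∧
      (π / 12 < (m * π - 2) / (4 * m)) ∧
      (∫ θ in (0 : ℝ)..(2 * π), (a * Real.cos (m * θ) + b * Real.sin (m * θ)) ^ 2 = π) ∧
      ((1 / 12) *
          ∫ θ in (0 : ℝ)..(2 * π), (a * Real.cos (m * θ) + b * Real.sin (m * θ)) ^ 2 <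
        ∫ θ in (0 : ℝ)..(π / 2), (a * Real.cos (m * θ) + b * Real.sin (m * θ)) ^ 2) := by
  have hm0 : m ≠ 0 := Nat.one_le_iff_ne_zero.mp hm
  have hquarter := sub_two_div_le_integral_zero_pi_div_two hm0 hab
  have htwelfth := pi_div_twelve_lt_sub_two_div (m := m) (by exact_mod_cast hm)
  have hfull : ∫ θ in (0 : ℝ)..(2 * π), (a * cos (m * θ) + b * sin (m * θ)) ^ 2 = π := by
    rw [integral_zero_two_pi_sq_mul_cos_add_mul_sin hm0, hab, one_mul]
  refine ⟨hquarter, htwelfth, hfull, ?_⟩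
  rw [hfull]
  linarith
end

section
/- Let M be a compact metric space with distance d, let K ⊆ M be a compact nonempty subset, let h : M → ℝ be continuous, let y ∈ K satisfy h(y) = 0, and let t > 0. Define d_h(x,K) := inf_{z∈K}(d(x,z) − h(z)). Then the following are equivalent: (i) there exists x ∈ M such that d(x,y) = t and d_h(x,K) = t; (ii) for every s with 0 < s < t, the closed ball {x ∈ M : d(x,y) ≤ t} is not contained in the set {x ∈ M : there exists z ∈ K with d(x,z) ≤ s + h(z)}. -/
/-- Metric-space content of the paper's Lemma `lem_distance_test`: there is a point
at distance exactly `t` from `y` and at modified distance exactly `t` from `K`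
iff for every `s < t` the closed ball `M(y,t)` is not contained in the modified
domain of influence `M(K, s + h)`. -/
theorem stmt_5 {M : Type*} [MetricSpace M] [CompactSpace M] (K : Set M)
    (hKc : IsCompact K) (hKne : K.Nonempty) (h : M → ℝ) (hh : Continuous h)
    (y : M) (hy : y ∈ K) (hy0 : h y = 0) (t : ℝ) (ht : 0 < t) :
    (∃ x : M, dist x y = t ∧ sInf ((fun z => dist x z - h z) '' K) = t) ↔
      (∀ s : ℝ, 0 < s → s < t →
        ¬ (Metric.closedBall y t ⊆ {x : M | ∃ z ∈ K, dist x z ≤ s + h z})) := by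
  set f : M → ℝ := fun x => sInf ((fun z => dist x z - h z) '' K) with hf
  have gcont : ∀ x : M, ContinuousOn (fun z => dist x z - h z) K := fun x =>
    ((continuous_const.dist continuous_id).sub hh).continuousOn
  have attain : ∀ x : M, ∃ z ∈ K, f x = dist x z - h z := fun x =>
    hKc.exists_sInf_image_eq hKne (gcont x)
  have fle : ∀ x : M, ∀ w ∈ K, f x ≤ dist x w - h w := by
    intro x w hw
    exact csInf_le ((hKc.image_of_continuousOn (gcont x)).bddBelow)
      (Set.mem_image_of_mem _ hw)
  have fy_le : ∀ x : M, f x ≤ dist x y := by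
    intro x
    have := fle x y hy
    rw [hy0] at this
    linarith
  have lip : ∀ x x' : M, f x ≤ f x' + dist x x' := by
    intro x x'
    obtain ⟨z, hz, hz'⟩ := attain x'
    calc f x ≤ dist x z - h z := fle x z hz
    _ ≤ (dist x x' + dist x' z) - h z := by
        have := dist_triangle x x' z; linarith
    _ = f x' + dist x x' := by rw [hz']; ring
  have fcont : Continuous f := by
    refine LipschitzWith.continuous (K := 1) (LipschitzWith.of_dist_le_mul ?_)
    intro x x'
    rw [Real.dist_eq, NNReal.coe_one, one_mul, abs_sub_le_iff]
    constructor
    · have := lip x x'; linarith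
    · have := lip x' x; rw [dist_comm] at this; linarith
  constructor
  · rintro ⟨x, hx1, hx2⟩ s hs hst hsub
    have hxball : x ∈ Metric.closedBall y t := by
      simp [Metric.mem_closedBall, hx1]
    obtain ⟨z, hz, hzle⟩ := hsub hxball
    have h1 : f x ≤ s := by have := fle x z hz; linarith
    have h2 : f x = t := hx2
    linarith
  · intro H
    set s : ℕ → ℝ := fun n => t - t / (n + 2) with hs
    have hspos : ∀ n : ℕ, 0 < s n := by
      intro n
      have h1 : t / ((n : ℝ) + 2) ≤ t / 2 := by
        apply div_le_div_of_nonneg_left ht.le (by norm_num)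
        · have : (0:ℝ) ≤ n := Nat.cast_nonneg n; linarith
      have h2 : t / 2 < t := by linarith
      simp only [hs]; linarith
    have hslt : ∀ n : ℕ, s n < t := by
      intro n
      have : 0 < t / ((n : ℝ) + 2) := by
        apply div_pos ht; have : (0:ℝ) ≤ n := Nat.cast_nonneg n; linarith
      simp only [hs]; linarith
    have hsmono : ∀ n : ℕ, s n ≤ s (n + 1) := by
      intro n
      have h0 : (0:ℝ) ≤ n := Nat.cast_nonneg n
      have : t / ((n : ℝ) + 1 + 2) ≤ t / ((n : ℝ) + 2) := by
        apply div_le_div_of_nonneg_left ht.le (by linarith) (by linarith)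
      simp only [hs]
      push_cast
      linarith
    set A : ℕ → Set M := fun n => Metric.closedBall y t ∩ f ⁻¹' Set.Ici (s n) with hA
    have hAclosed : ∀ n, IsClosed (A n) :=
      fun n => Metric.isClosed_closedBall.inter (isClosed_Ici.preimage fcont)
    have hAne : ∀ n, (A n).Nonempty := by
      intro n
      have := H (s n) (hspos n) (hslt n)
      rw [Set.not_subset] at this
      obtain ⟨x, hxb, hxns⟩ := this
      refine ⟨x, hxb, ?_⟩
      simp only [Set.mem_preimage, Set.mem_Ici]
      obtain ⟨z, hz, hz'⟩ := attain x
      by_contra hcon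
      push_neg at hcon
      exact hxns ⟨z, hz, by linarith⟩
    have hAmono : ∀ n, A (n + 1) ⊆ A n := by
      intro n x hx
      exact ⟨hx.1, le_trans (hsmono n) hx.2⟩
    obtain ⟨x, hx⟩ := IsCompact.nonempty_iInter_of_sequence_nonempty_isCompact_isClosed
      A hAmono hAne ((hAclosed 0).isCompact) hAclosed
    simp only [Set.mem_iInter] at hx
    have hxball : dist x y ≤ t := (hx 0).1
    have hxge : ∀ n : ℕ, s n ≤ f x := fun n => (hx n).2
    have hft : t ≤ f x := by
      by_contra hcon
      push_neg at hcon
      have hpos : 0 < t - f x := by linarith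
      obtain ⟨n, hn⟩ := exists_nat_gt (t / (t - f x))
      have hn2 : t / ((n:ℝ) + 2) < t - f x := by
        rw [div_lt_iff₀ (by positivity)]
        have h1 : t / (t - f x) < (n:ℝ) + 2 := by linarith
        calc t = (t / (t - f x)) * (t - f x) := by field_simp
        _ < ((n:ℝ) + 2) * (t - f x) := by
            exact mul_lt_mul_of_pos_right h1 hpos
        _ = (t - f x) * ((n:ℝ) + 2) := by ring
      have := hxge n
      simp only [hs] at this
      linarith
    have hfx : f x = t := le_antisymm (le_trans (fy_le x) hxball) hft
    exact ⟨x, le_antisymm hxball (by have := fy_le x; linarith), hfx⟩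
end

section
/- Let M be a compact metric space with distance d, let S ⊆ M, y₀ ∈ S, s₀ > 0, and for j = 1, …, J let K_j ⊆ M be compact nonempty subsets and h_j : M → ℝ continuous functions. Then the following are equivalent: (i) {x ∈ M : d(x,y₀) ≤ s₀} ⊆ ⋃_{j=1}^J {x ∈ M : there exists z ∈ K_j with d(x,z) ≤ h_j(z)}; (ii) for every ε > 0 there exists δ > 0 such that {x ∈ M : there exists y in the closure of {y' ∈ S : d(y',y₀) < δ} with d(x,y) ≤ s₀} ⊆ ⋃_{j=1}^J {x ∈ M : there exists z ∈ K_j with d(x,z) ≤ h_j(z) + ε}. -/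
/-- First observation in the proof of Proposition `prop_from_weak_conv_to_rels`:
the inclusion `M(y₀,s₀) ⊆ ⋃ⱼ M(Kⱼ,hⱼ)` of domains of influence is equivalent to
the corresponding inclusions with `y₀` replaced by small neighborhoods of `y₀` in
`S` and `hⱼ` replaced by `hⱼ + ε`. -/
theorem stmt_6 {M : Type*} [MetricSpace M] [CompactSpace M] (S : Set M)
    (y₀ : M) (hy₀ : y₀ ∈ S) (s₀ : ℝ) (hs₀ : 0 < s₀) (J : ℕ)
    (K : Fin J → Set M) (hKc : ∀ j, IsCompact (K j)) (hKne : ∀ j, (K j).Nonempty)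
    (h : Fin J → M → ℝ) (hh : ∀ j, Continuous (h j)) :
    (Metric.closedBall y₀ s₀ ⊆ ⋃ j, {x : M | ∃ z ∈ K j, dist x z ≤ h j z}) ↔
      (∀ ε : ℝ, 0 < ε → ∃ δ : ℝ, 0 < δ ∧
        {x : M | ∃ y ∈ closure {y' ∈ S | dist y' y₀ < δ}, dist x y ≤ s₀} ⊆
          ⋃ j, {x : M | ∃ z ∈ K j, dist x z ≤ h j z + ε}) := by
  constructor
  · intro hinc ε hε
    set W : Set M := ⋃ j, ⋃ z ∈ K j, Metric.ball z (h j z + ε) with hWdef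
    have hWopen : IsOpen W :=
      isOpen_iUnion fun j => isOpen_biUnion fun z _ => Metric.isOpen_ball
    have hWsub : W ⊆ ⋃ j, {x : M | ∃ z ∈ K j, dist x z ≤ h j z + ε} := by
      intro x hx
      simp only [hWdef, Set.mem_iUnion, Metric.mem_ball] at hx
      obtain ⟨j, z, hz, hd⟩ := hx
      exact Set.mem_iUnion.2 ⟨j, z, hz, hd.le⟩
    have hball : Metric.closedBall y₀ s₀ ⊆ W := by
      intro x hx
      obtain ⟨j, z, hz, hd⟩ := Set.mem_iUnion.1 (hinc hx)
      simp only [hWdef, Set.mem_iUnion, Metric.mem_ball]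
      exact ⟨j, z, hz, lt_of_le_of_lt hd (by linarith)⟩
    by_cases hWc : Wᶜ = ∅
    · refine ⟨1, one_pos, fun x _ => hWsub ?_⟩
      by_contra hxW
      exact (Set.eq_empty_iff_forall_notMem.1 hWc x) hxW
    · have hWcne : Wᶜ.Nonempty := Set.nonempty_iff_ne_empty.2 hWc
      have hWccomp : IsCompact Wᶜ := hWopen.isClosed_compl.isCompact
      obtain ⟨x₀, hx₀, hmin⟩ := hWccomp.exists_isMinOn hWcne
        ((continuous_id.dist continuous_const).continuousOn :
          ContinuousOn (fun x : M => dist x y₀) Wᶜ)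
      have hm : s₀ < dist x₀ y₀ := by
        by_contra hle
        push_neg at hle
        exact hx₀ (hball (Metric.mem_closedBall.2 hle))
      refine ⟨(dist x₀ y₀ - s₀) / 2, by linarith, ?_⟩
      rintro x ⟨y, hy, hxy⟩
      have hyb : dist y y₀ ≤ (dist x₀ y₀ - s₀) / 2 := by
        have hsub : closure {y' ∈ S | dist y' y₀ < (dist x₀ y₀ - s₀) / 2} ⊆
            Metric.closedBall y₀ ((dist x₀ y₀ - s₀) / 2) :=
          closure_minimal (fun y' hy' => Metric.mem_closedBall.2 hy'.2.le)
            Metric.isClosed_closedBall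
        exact Metric.mem_closedBall.1 (hsub hy)
      have hxd : dist x y₀ < dist x₀ y₀ :=
        calc dist x y₀ ≤ dist x y + dist y y₀ := dist_triangle _ _ _
          _ < dist x₀ y₀ := by linarith
      apply hWsub
      by_contra hxW
      exact absurd (hmin hxW) (not_le.2 hxd)
  · intro H
    intro x hx
    by_contra hxU
    have hx' : ∀ δ : ℝ, 0 < δ →
        x ∈ {x : M | ∃ y ∈ closure {y' ∈ S | dist y' y₀ < δ}, dist x y ≤ s₀} :=
      fun δ hδ => ⟨y₀, subset_closure ⟨hy₀, by simpa using hδ⟩, Metric.mem_closedBall.1 hx⟩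
    rcases Nat.eq_zero_or_pos J with hJ | hJ
    · obtain ⟨δ, hδ, hincl⟩ := H 1 one_pos
      have hmem := hincl (hx' δ hδ)
      subst hJ
      simp only [Set.mem_iUnion] at hmem
      obtain ⟨j, _⟩ := hmem
      exact absurd j.2 (by omega)
    · have key : ∀ j, ∃ εj > 0, ∀ z ∈ K j, h j z + εj ≤ dist x z := by
        intro j
        obtain ⟨z₀, hz₀, hmin⟩ := (hKc j).exists_isMinOn (hKne j)
          (((continuous_const.dist continuous_id).sub (hh j)).continuousOn :
            ContinuousOn (fun z => dist x z - h j z) (K j))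
        refine ⟨dist x z₀ - h j z₀, ?_, ?_⟩
        · have hlt : ¬ dist x z₀ ≤ h j z₀ :=
            fun hc => hxU (Set.mem_iUnion.2 ⟨j, z₀, hz₀, hc⟩)
          linarith [not_le.1 hlt]
        · intro z hz
          have : dist x z₀ - h j z₀ ≤ dist x z - h j z := hmin hz
          linarith
      choose εf hεf hεle using key
      have hne : (Finset.univ : Finset (Fin J)).Nonempty := ⟨⟨0, hJ⟩, Finset.mem_univ _⟩
      set E := Finset.univ.inf' hne εf with hEdef
      have hE : 0 < E := (Finset.lt_inf'_iff hne).2 fun j _ => hεf j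
      obtain ⟨δ, hδ, hincl⟩ := H (E / 2) (by linarith)
      obtain ⟨j, z, hz, hd⟩ := Set.mem_iUnion.1 (hincl (hx' δ hδ))
      have h1 : E ≤ εf j := Finset.inf'_le _ (Finset.mem_univ j)
      have h2 := hεle j z hz
      linarith
end

section
/- Let M be a geodesic metric space, that is, for all x, y ∈ M there exists a map γ : [0, d(x,y)] → M with γ(0) = x, γ(d(x,y)) = y, and d(γ(s), γ(t)) = |s − t| for all s, t ∈ [0, d(x,y)]. Let K ⊆ M be nonempty, let s₀ > 0, set A := {x ∈ M : there exists z ∈ K with d(x,z) ≤ s₀}, and let F ⊆ M be a closed set with A ⊄ F. Then there exists a nonempty open set V ⊆ A with V ∩ F = ∅. -/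
/-- In a geodesic metric space, if the domain of influence
`A = {x | ∃ z ∈ K, d(x,z) ≤ s₀}` is not contained in a closed set `F`, then there
is a nonempty open subset of `A` disjoint from `F`. -/
theorem stmt_8 {M : Type*} [MetricSpace M]
    (hgeo : ∀ x y : M, ∃ γ : ℝ → M, γ 0 = x ∧ γ (dist x y) = y ∧
      ∀ s ∈ Set.Icc (0 : ℝ) (dist x y), ∀ t ∈ Set.Icc (0 : ℝ) (dist x y),
        dist (γ s) (γ t) = |s - t|)
    (K : Set M) (hK : K.Nonempty) (s₀ : ℝ) (hs₀ : 0 < s₀)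
    (A : Set M) (hA : A = {x : M | ∃ z ∈ K, dist x z ≤ s₀})
    (F : Set M) (hF : IsClosed F) (hAF : ¬ A ⊆ F) :
    ∃ V : Set M, IsOpen V ∧ V.Nonempty ∧ V ⊆ A ∧ V ∩ F = ∅ := by
  -- pick x ∈ A \ F
  obtain ⟨x, hxA, hxF⟩ : ∃ x, x ∈ A ∧ x ∉ F := by
    simpa [Set.subset_def] using hAF
  obtain ⟨z, hzK, hxz⟩ : ∃ z ∈ K, dist x z ≤ s₀ := by
    rw [hA] at hxA; exact hxA
  -- ball around x avoiding F
  obtain ⟨r, hr, hrF⟩ : ∃ r > 0, Metric.ball x r ∩ F = ∅ := by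
    have : x ∈ Fᶜ := hxF
    rw [← hF.isOpen_compl.mem_nhds_iff, Metric.mem_nhds_iff] at this
    obtain ⟨r, hr, hsub⟩ := this
    exact ⟨r, hr, Set.eq_empty_of_forall_notMem fun y ⟨hy1, hy2⟩ => hsub hy1 hy2⟩
  obtain ⟨γ, hγ0, hγd, hγiso⟩ := hgeo x z
  set d := dist x z with hd
  have hd0 : 0 ≤ d := dist_nonneg
  set ε : ℝ := min (r / 2) (s₀ / 2) with hε
  have hε0 : 0 < ε := lt_min (by linarith) (by linarith)
  set t : ℝ := min ε d with ht
  have ht0 : 0 ≤ t := le_min hε0.le hd0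
  have htd : t ≤ d := min_le_right _ _
  set x' : M := γ t with hx'
  have hxx' : dist x x' = t := by
    have := hγiso 0 ⟨le_refl _, hd0⟩ t ⟨ht0, htd⟩
    rw [hγ0] at this
    rw [this, abs_of_nonpos (by linarith)]; ring
  have hx'z : dist x' z = d - t := by
    have := hγiso t ⟨ht0, htd⟩ d ⟨hd0, le_refl _⟩
    rw [hγd] at this
    rw [this, abs_of_nonpos (by linarith)]; ring
  have hx'zlt : dist x' z < s₀ := by
    rw [hx'z]
    rcases le_or_gt d ε with h | h
    · have : t = d := min_eq_right h
      rw [this]; linarith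
    · have : t = ε := min_eq_left h.le
      have hεs : ε ≤ s₀ / 2 := min_le_right _ _
      rw [this]; linarith
  have hxx'lt : dist x x' < r := by
    rw [hxx']
    have : t ≤ ε := min_le_left _ _
    have : ε ≤ r / 2 := min_le_left _ _
    have : t ≤ r / 2 := le_trans (min_le_left _ _) this
    linarith
  set δ : ℝ := min (s₀ - dist x' z) (r - dist x x') with hδ
  have hδ0 : 0 < δ := lt_min (by linarith) (by linarith)
  refine ⟨Metric.ball x' δ, Metric.isOpen_ball, ⟨x', Metric.mem_ball_self hδ0⟩, ?_, ?_⟩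
  · intro y hy
    rw [hA]
    refine ⟨z, hzK, ?_⟩
    have hyx' : dist y x' < δ := hy
    have : δ ≤ s₀ - dist x' z := min_le_left _ _
    calc dist y z ≤ dist y x' + dist x' z := dist_triangle _ _ _
      _ ≤ s₀ := by linarith
  · apply Set.eq_empty_of_forall_notMem
    rintro y ⟨hy1, hy2⟩
    have hyx' : dist y x' < δ := hy1
    have hδ2 : δ ≤ r - dist x x' := min_le_right _ _
    have hyx : dist y x < r := by
      calc dist y x ≤ dist y x' + dist x' x := dist_triangle _ _ _
        _ = dist y x' + dist x x' := by rw [dist_comm x' x]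
        _ < r := by linarith
    have : y ∈ Metric.ball x r ∩ F := ⟨by simpa [Metric.mem_ball] using hyx, hy2⟩
    rw [hrF] at this; exact this
end

section
/- Let M be a metric space with distance d, let K ⊆ M be a compact nonempty subset, and let h : M → ℝ be continuous. Then the intersection over all ε > 0 of the sets {x ∈ M : there exists z ∈ K with d(x,z) ≤ h(z) + ε} equals {x ∈ M : there exists z ∈ K with d(x,z) ≤ h(z)}. -/
/-- For compact `K` and continuous `h`, the `ε`-enlarged modified domains of
influence `M(K, h + ε)` intersect exactly in `M(K, h)`. -/
theorem stmt_13 {M : Type*} [MetricSpace M] (K : Set M) (hKc : IsCompact K)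
    (hKne : K.Nonempty) (h : M → ℝ) (hh : Continuous h) :
    (⋂ ε ∈ Set.Ioi (0 : ℝ), {x : M | ∃ z ∈ K, dist x z ≤ h z + ε}) =
      {x : M | ∃ z ∈ K, dist x z ≤ h z} := by
  ext x
  simp only [Set.mem_iInter, Set.mem_setOf_eq, Set.mem_Ioi]
  constructor
  · intro hx
    have hcont : ContinuousOn (fun z => dist x z - h z) K :=
      ((continuous_const.dist continuous_id).sub hh).continuousOn
    obtain ⟨z₀, hz₀K, hmin⟩ := hKc.exists_isMinOn hKne hcont
    refine ⟨z₀, hz₀K, ?_⟩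
    have key : dist x z₀ - h z₀ ≤ 0 := by
      by_contra hpos
      push_neg at hpos
      obtain ⟨z, hzK, hz⟩ := hx ((dist x z₀ - h z₀)/2) (by linarith)
      have := hmin hzK
      simp only [Set.mem_setOf_eq] at this
      linarith
    linarith
  · rintro ⟨z, hzK, hz⟩ ε hε
    exact ⟨z, hzK, by linarith⟩
end
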